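/- arXiv:1306.1803 — 2 statements merged into one kernel-verified Lean document; each statement's English description precedes it below -/
import Mathlib

section
/- If G is a d-regular simple graph on n vertices, then the number of independent sets of G satisfies i(G)^{d+1} ≥ (d+2)^n (equivalently, i(G)^{1/n} ≥ (d+2)^{1/(d+1)}). -/
open Classical Finset

namespace Paper

variable {V : Type*}

/-- The number of cliques (vertex sets inducing complete subgraphs, including
the empty set and singletons) of a graph. -/
noncomputable def cliqueCount [Fintype V] (G : SimpleGraph V) : ℕ :=
  (Finset.univ.filter fun s : Finset V => G.IsClique (s : Set V)).card

/-- The number of cliques of size `t`. -/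
noncomputable def cliqueCountSize [Fintype V] (G : SimpleGraph V) (t : ℕ) : ℕ :=
  (Finset.univ.filter fun s : Finset V => G.IsClique (s : Set V) ∧ s.card = t).card

/-- A finset of vertices is independent if its vertices are pairwise nonadjacent. -/
def IsIndepFinset (G : SimpleGraph V) (s : Finset V) : Prop :=
  (s : Set V).Pairwise fun u v => ¬ G.Adj u v

/-- The number of independent sets (including the empty set) of a graph. -/
noncomputable def indepCount [Fintype V] (G : SimpleGraph V) : ℕ :=
  (Finset.univ.filter fun s : Finset V => IsIndepFinset G s).card

/-- The number of independent sets of size `t`. -/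
noncomputable def indepCountSize [Fintype V] (G : SimpleGraph V) (t : ℕ) : ℕ :=
  (Finset.univ.filter fun s : Finset V => IsIndepFinset G s ∧ s.card = t).card

/-- `S_T`: the set of common neighbors of all vertices of `T`. -/
noncomputable def commonNbrs [Fintype V] (G : SimpleGraph V) (T : Finset V) : Finset V :=
  Finset.univ.filter fun v => ∀ x ∈ T, G.Adj x v

/-- The weight `w(C)` of a clique: the number of common neighbors of its vertices. -/
noncomputable def weight [Fintype V] (G : SimpleGraph V) (T : Finset V) : ℕ :=
  (commonNbrs G T).card

/-- A clique `T` is tight (for max degree bound `r`) if `w(T) = r + 1 - |T|`. -/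
def IsTight [Fintype V] (r : ℕ) (G : SimpleGraph V) (T : Finset V) : Prop :=
  G.IsClique (T : Set V) ∧ weight G T + T.card = r + 1

/-- A cluster is a maximal tight clique. -/
def IsCluster [Fintype V] (r : ℕ) (G : SimpleGraph V) (T : Finset V) : Prop :=
  IsTight r G T ∧ ∀ T' : Finset V, T ⊆ T' → IsTight r G T' → T' = T

/-- The graph `G_T`, obtained from `G` by adding all edges within `S_T` and deleting all
edges between `S_T` and `V(G) \ (T ∪ S_T)`. -/
noncomputable def modGraph [Fintype V] (G : SimpleGraph V) (T : Finset V) : SimpleGraph V :=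
  SimpleGraph.fromRel fun u v =>
    (u ∈ commonNbrs G T ∧ v ∈ commonNbrs G T) ∨
    (G.Adj u v ∧ ¬(u ∈ commonNbrs G T ∧ v ∉ T ∪ commonNbrs G T) ∧
      ¬(v ∈ commonNbrs G T ∧ u ∉ T ∪ commonNbrs G T))

/-- The graph `R_T`: the complement of the subgraph of `G` induced on `S_T`. -/
noncomputable def RT [Fintype V] (G : SimpleGraph V) (T : Finset V) :
    SimpleGraph ((commonNbrs G T : Finset V) : Set V) :=
  (SimpleGraph.induce ((commonNbrs G T : Finset V) : Set V) G)ᶜ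

/-- `δ_I`: the minimum degree in `R` over the vertices of `I`. -/
noncomputable def minDegOn {W : Type*} [Fintype W] (R : SimpleGraph W) (I : Finset W) : ℕ :=
  sInf ((fun x => R.degree x) '' (I : Set W))

/-- The fixed loss `φ(R) = Σ_{∅ ≠ I independent} (2 ^ δ_I - 1)`. -/
noncomputable def fixedLoss {W : Type*} [Fintype W] (R : SimpleGraph W) : ℕ :=
  ∑ I ∈ Finset.univ.filter (fun I : Finset W => I.Nonempty ∧ IsIndepFinset R I),
    (2 ^ minDegOn R I - 1)

/-- The disjoint union of `a` copies of `K_{r+1}` together with one copy of `K_b`. -/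
noncomputable def kUnion (a r b : ℕ) : SimpleGraph ((Fin a × Fin (r + 1)) ⊕ Fin b) :=
  SimpleGraph.fromRel fun x y =>
    match x, y with
    | Sum.inl (i, _), Sum.inl (j, _) => i = j
    | Sum.inr _, Sum.inr _ => True
    | _, _ => False

/-- The disjoint union of `a` copies of `K_3` together with one copy of the cycle `C_m`. -/
noncomputable def triCyc (a m : ℕ) : SimpleGraph ((Fin a × Fin 3) ⊕ Fin m) :=
  SimpleGraph.fromRel fun x y =>
    match x, y with
    | Sum.inl (i, _), Sum.inl (j, _) => i = j
    | Sum.inr u, Sum.inr v => (u.val + 1) % m = v.val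
    | _, _ => False

end Paper

/-!
Put `d + 1` disjoint copies of `G` side by side: the resulting graph has `n (d + 1)` vertices,
maximum degree `d`, and `i(G) ^ (d + 1)` independent sets. In a graph `H` on at least
`m (d + 1)` vertices of maximum degree `d`, the closed neighbourhood of an independent `t`-set
(`t < m`) has at most `t (d + 1)` vertices, so the set extends in at least `(m - t)(d + 1)` ways;
each `(t + 1)`-set arises from at most `t + 1` such extensions. Hence `H` has at least
`(d + 1) ^ t * (m choose t)` independent `t`-sets and, summing over `t`, at least
`(d + 2) ^ m` independent sets.
-/

namespace Paper

section MaxDegree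

variable {W : Type*} {H : SimpleGraph W}

lemma IsIndepFinset.insert {I : Finset W} {v : W} (hI : IsIndepFinset H I)
    (hv : ∀ u ∈ I, ¬ H.Adj u v) : IsIndepFinset H (insert v I) := by
  rw [IsIndepFinset, coe_insert]
  exact Set.pairwise_insert.2 ⟨hI, fun u hu _ => ⟨fun h => hv u hu h.symm, hv u hu⟩⟩

variable [Fintype W]

lemma sum_indepCountSize_le_indepCount (m : ℕ) :
    ∑ t ∈ range (m + 1), indepCountSize H t ≤ indepCount H := by
  simp only [indepCountSize, ← filter_filter]
  rw [sum_card_fiberwise_eq_card_filter]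
  exact card_filter_le _ _

variable [∀ v, Fintype (H.neighborSet v)] {d : ℕ}

lemma card_sub_le_card_extensions (hdeg : ∀ v, H.degree v ≤ d) {I : Finset W}
    (hI : IsIndepFinset H I) :
    Fintype.card W - #I * (d + 1) ≤ #{v | v ∉ I ∧ IsIndepFinset H (insert v I)} := by
  set F := I.biUnion fun u => insert u (H.neighborFinset u)
  have hF : #F ≤ #I * (d + 1) :=
    card_biUnion_le_card_mul _ _ _ fun u _ => (card_insert_le _ _).trans (by simpa using hdeg u)
  have hsub : Fᶜ ⊆ ({v | v ∉ I ∧ IsIndepFinset H (insert v I)} : Finset W) := by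
    intro v hv
    simp only [F, mem_compl, mem_biUnion, mem_insert, SimpleGraph.mem_neighborFinset,
      not_exists, not_and, not_or] at hv
    simp only [mem_filter, mem_univ, true_and]
    exact ⟨fun hvI => (hv v hvI).1 rfl, hI.insert fun u hu => (hv u hu).2⟩
  calc Fintype.card W - #I * (d + 1) ≤ Fintype.card W - #F := Nat.sub_le_sub_left hF _
    _ = #Fᶜ := (card_compl F).symm
    _ ≤ _ := card_le_card hsub

lemma indepCountSize_mul_le (hdeg : ∀ v, H.degree v ≤ d) (t : ℕ) :
    indepCountSize H t * (Fintype.card W - t * (d + 1)) ≤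
      indepCountSize H (t + 1) * (t + 1) := by
  refine card_mul_le_card_mul (· ⊆ ·) (fun I hI => ?_) (fun J hJ => ?_)
  · simp only [mem_filter, mem_univ, true_and] at hI
    obtain ⟨hind, rfl⟩ := hI
    refine (card_sub_le_card_extensions hdeg hind).trans
      (card_le_card_of_injOn (fun v => insert v I) (fun v hv => ?_) fun v hv w hw hvw => ?_)
    · simp only [coe_filter, mem_univ, true_and, Set.mem_ofPred_eq] at hv
      simp [hv.2, card_insert_of_notMem hv.1, subset_insert]
    · simp only [coe_filter, mem_univ, true_and, Set.mem_ofPred_eq] at hv hw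
      have hv' : v ∈ insert w I := by
        rw [← show insert v I = insert w I from hvw]; exact mem_insert_self v I
      exact (mem_insert.1 hv').resolve_right hv.1
  · simp only [mem_filter, mem_univ, true_and] at hJ
    calc #(bipartiteBelow (· ⊆ ·) _ J) ≤ #(J.powersetCard t) :=
          card_le_card fun I hI => by
            simp only [mem_bipartiteBelow, mem_filter, mem_univ, true_and] at hI
            exact mem_powersetCard.2 ⟨hI.2, hI.1.2⟩
      _ = t + 1 := by rw [card_powersetCard, hJ.2, Nat.choose_succ_self_right]

lemma choose_mul_pow_le_indepCountSize (hdeg : ∀ v, H.degree v ≤ d) {m : ℕ}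
    (hm : m * (d + 1) ≤ Fintype.card W) :
    ∀ t ≤ m, m.choose t * (d + 1) ^ t ≤ indepCountSize H t := by
  intro t
  induction t with
  | zero =>
    intro _
    simpa [indepCountSize, IsIndepFinset] using card_pos.2 ⟨(∅ : Finset W), by simp⟩
  | succ t ih =>
    intro ht
    have hroom : (m - t) * (d + 1) ≤ Fintype.card W - t * (d + 1) := by
      rw [Nat.sub_mul]; exact Nat.sub_le_sub_right hm _
    refine Nat.le_of_mul_le_mul_right ?_ t.succ_pos
    calc m.choose (t + 1) * (d + 1) ^ (t + 1) * (t + 1)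
        = m.choose t * (d + 1) ^ t * ((m - t) * (d + 1)) := by
          rw [mul_right_comm, Nat.choose_succ_right_eq]; ring
      _ ≤ indepCountSize H t * (Fintype.card W - t * (d + 1)) :=
          Nat.mul_le_mul (ih (by omega)) hroom
      _ ≤ indepCountSize H (t + 1) * (t + 1) := indepCountSize_mul_le hdeg t

theorem pow_le_indepCount_of_degree_le (hdeg : ∀ v, H.degree v ≤ d) {m : ℕ}
    (hm : m * (d + 1) ≤ Fintype.card W) : (d + 2) ^ m ≤ indepCount H :=
  calc (d + 2) ^ m = ∑ t ∈ range (m + 1), m.choose t * (d + 1) ^ t := by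
        rw [show d + 2 = (d + 1) + 1 by ring, add_pow]
        simp [mul_comm]
    _ ≤ ∑ t ∈ range (m + 1), indepCountSize H t :=
        sum_le_sum fun t ht =>
          choose_mul_pow_le_indepCountSize hdeg hm t (Nat.lt_succ_iff.1 (mem_range.1 ht))
    _ ≤ indepCount H := sum_indepCountSize_le_indepCount m

end MaxDegree

section DisjointCopies

variable {V ι : Type*} [Fintype V] [Fintype ι]

noncomputable def finsetProdEquivPi : Finset (V × ι) ≃ (ι → Finset V) where
  toFun s i := {v | (v, i) ∈ s}
  invFun f := {p | p.1 ∈ f p.2}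
  left_inv s := by ext; simp
  right_inv f := by ext; simp

lemma isIndepFinset_boxProd_bot_iff {G : SimpleGraph V} {s : Finset (V × ι)} :
    IsIndepFinset (G □ (⊥ : SimpleGraph ι)) s ↔ ∀ i, IsIndepFinset G (finsetProdEquivPi s i) := by
  simp only [IsIndepFinset, Set.Pairwise, finsetProdEquivPi, Equiv.coe_fn_mk, coe_filter,
    mem_univ, true_and, Set.mem_ofPred_eq, mem_coe, SimpleGraph.boxProd_adj,
    SimpleGraph.bot_adj, false_and, or_false, not_and, Prod.forall]
  constructor
  · intro h i u hu v hv huv hadj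
    exact h u i hu v i hv (fun h' => huv (congrArg Prod.fst h')) hadj rfl
  · rintro h u i hu v j hv huv hadj rfl
    exact h i hu hv (fun h' => huv (h' ▸ rfl)) hadj

lemma indepCount_boxProd_bot (G : SimpleGraph V) :
    indepCount (G □ (⊥ : SimpleGraph ι)) = indepCount G ^ Fintype.card ι := by
  simp only [indepCount, ← Fintype.card_subtype]
  rw [← Fintype.card_fun, Fintype.card_congr
    ((finsetProdEquivPi.subtypeEquiv fun _ => isIndepFinset_boxProd_bot_iff).trans
      (Equiv.subtypePiEquivPi))]

end DisjointCopies

end Paper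

open Paper

/-- **Corollary 2.3.** If `G` is `d`-regular on `n` vertices, then
`i(G)^{d+1} ≥ (d+2)^n`, i.e. `i(G)^{1/n} ≥ (d+2)^{1/(d+1)}`. -/
theorem stmt6 {V : Type*} [Fintype V] (n d : ℕ) (hcard : Fintype.card V = n)
    (G : SimpleGraph V) (hreg : G.IsRegularOfDegree d) :
    (d + 2) ^ n ≤ indepCount G ^ (d + 1) := by
  set H := G □ (⊥ : SimpleGraph (Fin (d + 1)))
  have hdeg : ∀ v, H.degree v ≤ d := fun v => by
    rw [SimpleGraph.degree_boxProd, hreg.degree_eq, SimpleGraph.bot_degree, add_zero]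
  have hcardH : n * (d + 1) ≤ Fintype.card (V × Fin (d + 1)) := by
    rw [Fintype.card_prod, Fintype.card_fin, hcard]
  have := pow_le_indepCount_of_degree_le hdeg hcardH
  rwa [indepCount_boxProd_bot, Fintype.card_fin] at this
end

section
/- Let G be a simple graph with maximum degree Δ(G) ≤ r and let T be a tight clique of G with |T| ≥ 2. Suppose R_T contains a connected component that is a single edge on vertices u and v. Let G' be the graph obtained from G by adding the edge uv and deleting all edges joining {u, v} to V(G) \ (T ∪ S_T). Then Δ(G') ≤ r and k(G') > k(G). -/
open Classical Finset

open Paper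

/-!
Every vertex of the tight clique `T` already has its `r` neighbours inside `T ∪ S_T`, and `u` is
adjacent to the `r - 1` vertices of `T ∪ S_T` other than `u, v`. Hence the rewiring keeps all
degrees at most `r`, and `u` (likewise `v`) has at most one neighbour `z` outside `T ∪ S_T`.
A clique destroyed by the rewiring contains `u` (or `v`) together with `z`, and the rest of it is a
clique in `W = S_T \ {u, v}`, since vertices of `T` are not adjacent to `z`; so at most `2 k(G[W])`
cliques are lost. Conversely `C ↦ C ∪ {u, v}` sends the cliques of `G[T ∪ W]` to new cliques, and
there are at least `2 ^ |T| k(G[W]) ≥ 4 k(G[W])` of them because `T` is joined completely to `W`.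
-/

namespace Paper

variable {V : Type*}

lemma card_filter_lt_card_filter {α : Type*} [Fintype α] {p q : α → Prop} [DecidablePred p]
    [DecidablePred q]
    (h : #{x | p x ∧ ¬ q x} < #{x | q x ∧ ¬ p x}) : #{x | p x} < #{x | q x} := by
  have hp := Finset.card_filter_add_card_filter_not (s := univ.filter p) q
  have hq := Finset.card_filter_add_card_filter_not (s := univ.filter q) p
  simp only [Finset.filter_filter] at hp hq
  rw [← hp, ← hq, Finset.filter_congr fun x _ => and_comm (a := q x) (b := p x)]
  omega

section Degree

variable [Fintype V] {G : SimpleGraph V} {s : Finset V} {x y z : V}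

lemma mem_of_adj_of_subset_neighborFinset (hs : s ⊆ G.neighborFinset x)
    (hdeg : G.degree x ≤ #s) (hxy : G.Adj x y) : y ∈ s := by
  rw [Finset.eq_of_subset_of_card_le hs hdeg]
  exact (G.mem_neighborFinset x y).mpr hxy

lemma eq_of_adj_of_subset_neighborFinset (hs : s ⊆ G.neighborFinset x)
    (hdeg : G.degree x ≤ #s + 1) (hy : G.Adj x y) (hz : G.Adj x z) (hys : y ∉ s) (hzs : z ∉ s) :
    y = z := by
  by_contra hyz
  have hsub : insert y (insert z s) ⊆ G.neighborFinset x := by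
    simp only [Finset.insert_subset_iff, SimpleGraph.mem_neighborFinset]
    exact ⟨hy, hz, hs⟩
  have := Finset.card_le_card hsub
  rw [Finset.card_insert_of_notMem (by simp [hyz, hys]), Finset.card_insert_of_notMem hzs,
    SimpleGraph.card_neighborFinset_eq_degree] at this
  omega

end Degree

noncomputable def cliquesWithin (G : SimpleGraph V) (s : Finset V) : Finset (Finset V) :=
  s.powerset.filter fun C => G.IsClique (C : Set V)

section Cliques

variable {G : SimpleGraph V}

@[simp]
lemma mem_cliquesWithin {s C : Finset V} :
    C ∈ cliquesWithin G s ↔ C ⊆ s ∧ G.IsClique (C : Set V) := by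
  simp [cliquesWithin]

lemma card_cliquesWithin_pos (s : Finset V) : 0 < #(cliquesWithin G s) :=
  Finset.card_pos.mpr ⟨∅, by simp⟩

lemma two_pow_card_mul_card_cliquesWithin_le {X Y : Finset V} (hX : G.IsClique (X : Set V))
    (hXY : ∀ x ∈ X, ∀ y ∈ Y, G.Adj x y) :
    2 ^ #X * #(cliquesWithin G Y) ≤ #(cliquesWithin G (X ∪ Y)) := by
  have hdisj : Disjoint X Y :=
    Finset.disjoint_left.mpr fun x hxX hxY => G.loopless.irrefl x (hXY x hxX x hxY)
  rw [← Finset.card_powerset X, ← Finset.card_product]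
  refine Finset.card_le_card_of_injOn (fun p => p.1 ∪ p.2) ?_ ?_
  · rintro ⟨B, C⟩ hBC
    simp only [Finset.coe_product, Set.mem_prod, Finset.mem_coe, Finset.mem_powerset,
      mem_cliquesWithin] at hBC
    obtain ⟨hBX, hCY, hC⟩ := hBC
    refine mem_cliquesWithin.mpr ⟨Finset.union_subset_union hBX hCY, ?_⟩
    rw [Finset.coe_union, SimpleGraph.IsClique, Set.pairwise_union]
    exact ⟨hX.subset (by simpa using hBX), hC, fun b hb c hc _ =>
      ⟨hXY b (hBX hb) c (hCY hc), (hXY b (hBX hb) c (hCY hc)).symm⟩⟩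
  · rintro ⟨B, C⟩ hBC ⟨B', C'⟩ hBC' heq
    simp only [Finset.coe_product, Set.mem_prod, Finset.mem_coe, Finset.mem_powerset,
      mem_cliquesWithin] at hBC hBC' heq
    have hX : ∀ {B C : Finset V}, B ⊆ X → C ⊆ Y → (B ∪ C) ∩ X = B := fun hB hC => by
      rw [Finset.union_inter_distrib_right, Finset.inter_eq_left.mpr hB,
        Finset.disjoint_iff_inter_eq_empty.mp (hdisj.symm.mono_left hC), Finset.union_empty]
    have hY : ∀ {B C : Finset V}, B ⊆ X → C ⊆ Y → (B ∪ C) ∩ Y = C := fun hB hC => by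
      rw [Finset.union_inter_distrib_right, Finset.inter_eq_left.mpr hC,
        Finset.disjoint_iff_inter_eq_empty.mp (hdisj.mono_left hB), Finset.empty_union]
    rw [Prod.mk.injEq]
    exact ⟨by rw [← hX hBC.1 hBC.2.1, heq, hX hBC'.1 hBC'.2.1],
      by rw [← hY hBC.1 hBC.2.1, heq, hY hBC'.1 hBC'.2.1]⟩

end Cliques

noncomputable def rewire (G : SimpleGraph V) (u v : V) (N : Finset V) : SimpleGraph V :=
  SimpleGraph.fromRel fun x y =>
    (x = u ∧ y = v) ∨
    (G.Adj x y ∧ ¬(x ∈ ({u, v} : Finset V) ∧ y ∉ N) ∧ ¬(y ∈ ({u, v} : Finset V) ∧ x ∉ N))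

section Rewire

variable {G : SimpleGraph V} {u v x y : V} {N : Finset V}

lemma rewire_adj : (rewire G u v N).Adj x y ↔ x ≠ y ∧ (s(x, y) = s(u, v) ∨
    G.Adj x y ∧ (x = u ∨ x = v → y ∈ N) ∧ (y = u ∨ y = v → x ∈ N)) := by
  simp only [rewire, SimpleGraph.fromRel_adj, Finset.mem_insert, Finset.mem_singleton,
    Sym2.eq_iff]
  constructor <;> rintro ⟨hxy, h⟩ <;> refine ⟨hxy, ?_⟩ <;> grind [SimpleGraph.adj_comm]

lemma rewire_comm : rewire G v u N = rewire G u v N := by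
  ext x y
  simp only [rewire_adj, Sym2.eq_swap]
  tauto

lemma rewire_adj_left (huv : u ≠ v) : (rewire G u v N).Adj u v :=
  rewire_adj.mpr ⟨huv, Or.inl rfl⟩

lemma rewire_adj_of_adj (h : G.Adj x y) (hx : x = u ∨ x = v → y ∈ N)
    (hy : y = u ∨ y = v → x ∈ N) : (rewire G u v N).Adj x y :=
  rewire_adj.mpr ⟨h.ne, Or.inr ⟨h, hx, hy⟩⟩

lemma adj_of_rewire_adj (hxu : x ≠ u) (hxv : x ≠ v) (h : (rewire G u v N).Adj x y) :
    G.Adj x y := by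
  obtain ⟨-, h | h⟩ := rewire_adj.mp h
  · rcases Sym2.eq_iff.mp h with ⟨rfl, -⟩ | ⟨rfl, -⟩ <;> contradiction
  · exact h.1

lemma mem_of_rewire_adj (hu : u ∈ N) (hv : v ∈ N) (hx : x = u ∨ x = v)
    (h : (rewire G u v N).Adj x y) : y ∈ N := by
  obtain ⟨-, h | h⟩ := rewire_adj.mp h
  · rcases Sym2.eq_iff.mp h with ⟨-, rfl⟩ | ⟨-, rfl⟩ <;> assumption
  · exact h.2.1 hx

lemma exists_adj_notMem_of_not_isClique_rewire {L : Finset V} (hL : G.IsClique (L : Set V))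
    (hL' : ¬ (rewire G u v N).IsClique (L : Set V)) :
    ∃ x ∈ L, (x = u ∨ x = v) ∧ ∃ z ∈ L, z ∉ N ∧ G.Adj x z := by
  contrapose! hL'
  intro x hx y hy hxy
  have hGxy := hL hx hy hxy
  refine rewire_adj_of_adj hGxy (fun h => ?_) (fun h => ?_)
  · by_contra hyN
    exact hL' x hx h y hy hyN hGxy
  · by_contra hxN
    exact hL' y hy h x hx hxN hGxy.symm

variable [Fintype V]

lemma degree_rewire_le_of_ne (hxu : x ≠ u) (hxv : x ≠ v) :
    (rewire G u v N).degree x ≤ G.degree x := by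
  refine Finset.card_le_card fun y hy => ?_
  rw [SimpleGraph.mem_neighborFinset] at hy ⊢
  exact adj_of_rewire_adj hxu hxv hy

lemma degree_rewire_add_one_le (hu : u ∈ N) (hv : v ∈ N) (hx : x = u ∨ x = v) :
    (rewire G u v N).degree x + 1 ≤ #N := by
  have hxN : x ∈ N := by rcases hx with rfl | rfl <;> assumption
  rw [← Finset.card_erase_add_one hxN, add_le_add_iff_right]
  refine Finset.card_le_card fun y hy => ?_
  rw [SimpleGraph.mem_neighborFinset] at hy
  exact Finset.mem_erase.mpr ⟨hy.ne', mem_of_rewire_adj hu hv hx hy⟩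

end Rewire

section TightClique

variable [Fintype V] {G : SimpleGraph V} {T : Finset V} {r : ℕ} {u v : V}

lemma disjoint_commonNbrs (G : SimpleGraph V) (T : Finset V) : Disjoint T (commonNbrs G T) :=
  Finset.disjoint_left.mpr fun t ht htS =>
    G.loopless.irrefl t ((Finset.mem_filter.mp htS).2 t ht)

lemma adj_of_mem_commonNbrs {t x : V} (ht : t ∈ T) (hx : x ∈ commonNbrs G T) : G.Adj t x :=
  (Finset.mem_filter.mp hx).2 t ht

lemma IsTight.card_union (hT : IsTight r G T) : #(T ∪ commonNbrs G T) = r + 1 := by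
  rw [Finset.card_union_of_disjoint (disjoint_commonNbrs G T), add_comm]
  exact hT.2

lemma IsTight.mem_of_adj (hdeg : G.maxDegree ≤ r) (hT : IsTight r G T) {t x : V} (ht : t ∈ T)
    (hx : G.Adj t x) : x ∈ T ∪ commonNbrs G T := by
  have htN : t ∈ T ∪ commonNbrs G T := Finset.mem_union_left _ ht
  refine Finset.mem_of_mem_erase (a := t) (mem_of_adj_of_subset_neighborFinset ?_ ?_ hx)
  · intro y hy
    obtain ⟨hyt, hy⟩ := Finset.mem_erase.mp hy
    rw [SimpleGraph.mem_neighborFinset]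
    rcases Finset.mem_union.mp hy with hyT | hyS
    · exact hT.1 ht hyT hyt.symm
    · exact adj_of_mem_commonNbrs ht hyS
  · have := Finset.card_erase_add_one htN
    rw [hT.card_union] at this
    exact (G.degree_le_maxDegree t).trans (by omega)

/-- `{u, v}` spans a component of `R_T` which is a single edge. -/
structure IsK2Component (G : SimpleGraph V) (T : Finset V) (u v : V) : Prop where
  left_mem : u ∈ commonNbrs G T
  right_mem : v ∈ commonNbrs G T
  ne : u ≠ v
  not_adj : ¬ G.Adj u v
  adj : ∀ w ∈ commonNbrs G T, w ≠ u → w ≠ v → G.Adj u w ∧ G.Adj v w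

namespace IsK2Component

lemma symm (h : IsK2Component G T u v) : IsK2Component G T v u :=
  ⟨h.right_mem, h.left_mem, h.ne.symm, fun h' => h.not_adj h'.symm,
    fun w hw hwv hwu => (h.adj w hw hwu hwv).symm⟩

lemma left_notMem (h : IsK2Component G T u v) : u ∉ T ∪ ((commonNbrs G T).erase u).erase v := by
  simp only [Finset.mem_union, Finset.mem_erase, ne_eq, not_true_eq_false, and_false, false_and,
    or_false]
  exact fun huT => Finset.disjoint_left.mp (disjoint_commonNbrs G T) huT h.left_mem

lemma right_notMem (h : IsK2Component G T u v) :
    v ∉ T ∪ ((commonNbrs G T).erase u).erase v := by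
  simpa only [Finset.erase_right_comm] using h.symm.left_notMem

lemma adj_left (h : IsK2Component G T u v) {w : V}
    (hw : w ∈ T ∪ ((commonNbrs G T).erase u).erase v) : G.Adj u w := by
  rcases Finset.mem_union.mp hw with hwT | hw
  · exact (adj_of_mem_commonNbrs hwT h.left_mem).symm
  · obtain ⟨hwv, hwu, hwS⟩ := by simpa only [Finset.mem_erase] using hw
    exact (h.adj w hwS hwu hwv).1

lemma adj_right (h : IsK2Component G T u v) {w : V}
    (hw : w ∈ T ∪ ((commonNbrs G T).erase u).erase v) : G.Adj v w :=
  h.symm.adj_left (by rwa [Finset.erase_right_comm])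

lemma card_union_erase_erase_add_two (h : IsK2Component G T u v) (hT : IsTight r G T) :
    #(T ∪ ((commonNbrs G T).erase u).erase v) + 2 = r + 1 := by
  have hvS : v ∈ (commonNbrs G T).erase u := Finset.mem_erase.mpr ⟨h.ne.symm, h.right_mem⟩
  have hW := Finset.card_erase_add_one hvS
  have hS := Finset.card_erase_add_one h.left_mem
  rw [Finset.card_union_of_disjoint ((disjoint_commonNbrs G T).mono_right
    ((Finset.erase_subset _ _).trans (Finset.erase_subset _ _))), ← hT.card_union,
    Finset.card_union_of_disjoint (disjoint_commonNbrs G T)]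
  omega

lemma eq_of_adj_of_notMem (hdeg : G.maxDegree ≤ r) (hT : IsTight r G T)
    (h : IsK2Component G T u v) {y z : V} (hy : G.Adj u y) (hz : G.Adj u z)
    (hyN : y ∉ T ∪ commonNbrs G T) (hzN : z ∉ T ∪ commonNbrs G T) : y = z := by
  have hW : T ∪ ((commonNbrs G T).erase u).erase v ⊆ T ∪ commonNbrs G T :=
    Finset.union_subset_union_right ((Finset.erase_subset _ _).trans (Finset.erase_subset _ _))
  refine eq_of_adj_of_subset_neighborFinset (fun w hw => ?_) ?_ hy hz
    (fun hy' => hyN (hW hy')) (fun hz' => hzN (hW hz'))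
  · exact (G.mem_neighborFinset u w).mpr (h.adj_left hw)
  · have := h.card_union_erase_erase_add_two hT
    exact (G.degree_le_maxDegree u).trans (by omega)

lemma maxDegree_rewire_le (hdeg : G.maxDegree ≤ r) (hT : IsTight r G T)
    (h : IsK2Component G T u v) : (rewire G u v (T ∪ commonNbrs G T)).maxDegree ≤ r := by
  refine SimpleGraph.maxDegree_le_of_forall_degree_le _ _ fun x => ?_
  by_cases hx : x = u ∨ x = v
  · have := degree_rewire_add_one_le (G := G) (Finset.mem_union_right T h.left_mem)
      (Finset.mem_union_right T h.right_mem) hx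
    rw [hT.card_union] at this
    omega
  · rw [not_or] at hx
    exact (degree_rewire_le_of_ne hx.1 hx.2).trans ((G.degree_le_maxDegree x).trans hdeg)

lemma eq_insert_insert_of_not_isClique_rewire (hdeg : G.maxDegree ≤ r) (hT : IsTight r G T)
    (h : IsK2Component G T u v) {L : Finset V} (hL : G.IsClique (L : Set V))
    (hL' : ¬ (rewire G u v (T ∪ commonNbrs G T)).IsClique (L : Set V)) (huL : u ∈ L) :
    ∃ z ∉ T ∪ commonNbrs G T, G.Adj u z ∧
      L = insert u (insert z (L ∩ ((commonNbrs G T).erase u).erase v)) := by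
  obtain ⟨x, hxL, hx, z, hzL, hzN, hxz⟩ := exists_adj_notMem_of_not_isClique_rewire hL hL'
  have hvL : v ∉ L := fun hvL => h.not_adj (hL huL hvL h.ne)
  have hxu : x = u := hx.resolve_right (by rintro rfl; exact hvL hxL)
  rw [hxu] at hxz
  refine ⟨z, hzN, hxz, Finset.ext fun w => ⟨fun hw => ?_, ?_⟩⟩
  · simp only [Finset.mem_insert, Finset.mem_inter, Finset.mem_erase]
    by_cases hwu : w = u
    · exact Or.inl hwu
    by_cases hwz : w = z
    · exact Or.inr (Or.inl hwz)
    have huw : G.Adj u w := hL huL hw (Ne.symm hwu)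
    have hwz' : G.Adj w z := hL hw hzL hwz
    have hwN : w ∈ T ∪ commonNbrs G T := by
      by_contra hwN
      exact hwz (h.eq_of_adj_of_notMem hdeg hT huw hxz hwN hzN)
    have hwT : w ∉ T := fun hwT => hzN (hT.mem_of_adj hdeg hwT hwz')
    have hwS : w ∈ commonNbrs G T := (Finset.mem_union.mp hwN).resolve_left hwT
    exact Or.inr (Or.inr ⟨hw, fun hwv => hvL (hwv ▸ hw), hwu, hwS⟩)
  · simp only [Finset.mem_insert, Finset.mem_inter]
    rintro (rfl | rfl | ⟨hw, -⟩) <;> assumption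

lemma card_lost_mem_le (hdeg : G.maxDegree ≤ r) (hT : IsTight r G T) (h : IsK2Component G T u v) :
    #{L : Finset V | (G.IsClique (L : Set V) ∧
        ¬ (rewire G u v (T ∪ commonNbrs G T)).IsClique (L : Set V)) ∧ u ∈ L} ≤
      #(cliquesWithin G (((commonNbrs G T).erase u).erase v)) := by
  by_cases hz : ∃ z ∉ T ∪ commonNbrs G T, G.Adj u z
  swap
  · refine le_trans (b := 0) ?_ (Nat.zero_le _)
    rw [Nat.le_zero, Finset.card_eq_zero, Finset.filter_eq_empty_iff]
    rintro L - ⟨⟨hL, hL'⟩, huL⟩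
    obtain ⟨z, hzN, huz, -⟩ := h.eq_insert_insert_of_not_isClique_rewire hdeg hT hL hL' huL
    exact hz ⟨z, hzN, huz⟩
  obtain ⟨z, hzN, huz⟩ := hz
  refine (Finset.card_le_card fun L hL => ?_).trans
    (Finset.card_image_le (s := cliquesWithin G (((commonNbrs G T).erase u).erase v))
      (f := fun C => insert u (insert z C)))
  obtain ⟨⟨hL, hL'⟩, huL⟩ := (Finset.mem_filter.mp hL).2
  obtain ⟨z', hz'N, huz', hLeq⟩ := h.eq_insert_insert_of_not_isClique_rewire hdeg hT hL hL' huL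
  rw [h.eq_of_adj_of_notMem hdeg hT huz' huz hz'N hzN] at hLeq
  exact Finset.mem_image.mpr ⟨_, mem_cliquesWithin.mpr ⟨Finset.inter_subset_right,
    hL.subset (Finset.coe_subset.mpr Finset.inter_subset_left)⟩, hLeq.symm⟩

lemma card_lost_le (hdeg : G.maxDegree ≤ r) (hT : IsTight r G T) (h : IsK2Component G T u v) :
    #{L : Finset V | G.IsClique (L : Set V) ∧
        ¬ (rewire G u v (T ∪ commonNbrs G T)).IsClique (L : Set V)} ≤
      2 * #(cliquesWithin G (((commonNbrs G T).erase u).erase v)) := by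
  have hu := h.card_lost_mem_le hdeg hT
  have hv := h.symm.card_lost_mem_le hdeg hT
  rw [rewire_comm, Finset.erase_right_comm] at hv
  set G' := rewire G u v (T ∪ commonNbrs G T)
  calc #{L : Finset V | G.IsClique (L : Set V) ∧ ¬ G'.IsClique (L : Set V)}
      ≤ #{L : Finset V | (G.IsClique (L : Set V) ∧ ¬ G'.IsClique (L : Set V)) ∧ u ∈ L ∨
          (G.IsClique (L : Set V) ∧ ¬ G'.IsClique (L : Set V)) ∧ v ∈ L} := by
        refine Finset.card_le_card fun L hL => Finset.mem_filter.mpr ⟨Finset.mem_univ L, ?_⟩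
        obtain ⟨hG, hG'⟩ := (Finset.mem_filter.mp hL).2
        obtain ⟨x, hxL, rfl | rfl, -⟩ := exists_adj_notMem_of_not_isClique_rewire hG hG'
        exacts [Or.inl ⟨⟨hG, hG'⟩, hxL⟩, Or.inr ⟨⟨hG, hG'⟩, hxL⟩]
    _ ≤ _ := by
        rw [Finset.filter_or]
        exact (Finset.card_union_le _ _).trans (by omega)

lemma card_cliquesWithin_le_card_gained (h : IsK2Component G T u v) :
    #(cliquesWithin G (T ∪ ((commonNbrs G T).erase u).erase v)) ≤
      #{C : Finset V | (rewire G u v (T ∪ commonNbrs G T)).IsClique (C : Set V) ∧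
        ¬ G.IsClique (C : Set V)} := by
  set A := T ∪ ((commonNbrs G T).erase u).erase v
  have hAN : A ⊆ T ∪ commonNbrs G T :=
    Finset.union_subset_union_right ((Finset.erase_subset _ _).trans (Finset.erase_subset _ _))
  have huN : u ∈ T ∪ commonNbrs G T := Finset.mem_union_right T h.left_mem
  have hvN : v ∈ T ∪ commonNbrs G T := Finset.mem_union_right T h.right_mem
  have hnot : ∀ C ⊆ A, u ∉ insert v C ∧ v ∉ C := fun C hC =>
    ⟨by simpa [h.ne] using fun huC => h.left_notMem (hC huC), fun hvC => h.right_notMem (hC hvC)⟩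
  refine Finset.card_le_card_of_injOn (fun C : Finset V => insert u (insert v C))
    (fun C hC => ?_) ?_
  · obtain ⟨hCA, hC⟩ := mem_cliquesWithin.mp hC
    simp only [Finset.coe_filter, Finset.mem_univ, true_and, Set.mem_ofPred_eq, Finset.coe_insert]
    refine ⟨?_, fun hclq => h.not_adj (hclq (by simp) (by simp) h.ne)⟩
    rw [SimpleGraph.isClique_insert, SimpleGraph.isClique_insert]
    refine ⟨⟨fun x hx y hy hxy => ?_, fun w hw _ => ?_⟩, fun w hw _ => ?_⟩
    · exact rewire_adj_of_adj (hC hx hy hxy) (fun _ => hAN (hCA hy)) (fun _ => hAN (hCA hx))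
    · exact rewire_adj_of_adj (h.adj_right (hCA hw)) (fun _ => hAN (hCA hw)) (fun _ => hvN)
    · rcases hw with rfl | hw
      · exact rewire_adj_left h.ne
      · exact rewire_adj_of_adj (h.adj_left (hCA hw)) (fun _ => hAN (hCA hw)) (fun _ => huN)
  · intro C₁ hC₁ C₂ hC₂ heq
    have hC₁ := hnot C₁ (mem_cliquesWithin.mp hC₁).1
    have hC₂ := hnot C₂ (mem_cliquesWithin.mp hC₂).1
    have := congrArg (fun s : Finset V => (s.erase u).erase v) heq
    simpa only [Finset.erase_insert hC₁.1, Finset.erase_insert hC₁.2, Finset.erase_insert hC₂.1,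
      Finset.erase_insert hC₂.2] using this

end IsK2Component

end TightClique

end Paper

/-- **Lemma 4.6.** Suppose `Δ(G) ≤ r`, `T` is a tight clique with `|T| ≥ 2`, and `R_T` has a
`K_2` component on vertices `u, v` (i.e. `u, v ∈ S_T` are distinct and nonadjacent in `G`,
and every other vertex of `S_T` is adjacent in `G` to both `u` and `v`).  Then the graph `G'`
obtained from `G` by adding the edge `uv` and deleting all edges joining `{u, v}` to
`V(G) \ (T ∪ S_T)` satisfies `Δ(G') ≤ r` and `k(G') > k(G)`. -/
theorem stmt13 {V : Type*} [Fintype V] (r : ℕ) (G : SimpleGraph V) (hdeg : G.maxDegree ≤ r)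
    (T : Finset V) (hT : IsTight r G T) (hT2 : 2 ≤ T.card)
    (u v : V) (hu : u ∈ commonNbrs G T) (hv : v ∈ commonNbrs G T) (huv : u ≠ v)
    (hnadj : ¬ G.Adj u v)
    (hK2 : ∀ w ∈ commonNbrs G T, w ≠ u → w ≠ v → G.Adj u w ∧ G.Adj v w)
    (G' : SimpleGraph V)
    (hG' : G' = SimpleGraph.fromRel fun x y =>
      (x = u ∧ y = v) ∨
      (G.Adj x y ∧ ¬(x ∈ ({u, v} : Finset V) ∧ y ∉ T ∪ commonNbrs G T) ∧
        ¬(y ∈ ({u, v} : Finset V) ∧ x ∉ T ∪ commonNbrs G T))) :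
    G'.maxDegree ≤ r ∧ cliqueCount G < cliqueCount G' := by
  obtain rfl : G' = rewire G u v (T ∪ commonNbrs G T) := hG'
  have hK : IsK2Component G T u v := ⟨hu, hv, huv, hnadj, hK2⟩
  refine ⟨hK.maxDegree_rewire_le hdeg hT, card_filter_lt_card_filter ?_⟩
  set W := ((commonNbrs G T).erase u).erase v
  calc _ ≤ 2 * #(cliquesWithin G W) := hK.card_lost_le hdeg hT
    _ < 2 ^ #T * #(cliquesWithin G W) := by
        have : 2 < 2 ^ #T := (Nat.lt_two_pow_self).trans_le (Nat.pow_le_pow_right two_pos hT2)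
        exact Nat.mul_lt_mul_of_pos_right this (card_cliquesWithin_pos W)
    _ ≤ #(cliquesWithin G (T ∪ W)) := two_pow_card_mul_card_cliquesWithin_le hT.1
        fun t ht w hw =>
          adj_of_mem_commonNbrs ht (Finset.mem_of_mem_erase (Finset.mem_of_mem_erase hw))
    _ ≤ _ := hK.card_cliquesWithin_le_card_gained
end
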